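/- arXiv:2011.10037 — 3 statements merged into one kernel-verified Lean document; each statement's English description precedes it below -/
import Mathlib

section
/- For every ordinal λ, the map sending a finite subset p = {p_0 > p_1 > ... > p_{n-1}} of λ to the ordinal sum 2^{p_0} + 2^{p_1} + ... + 2^{p_{n-1}} (ordinal exponentiation and addition, summed in decreasing order of exponents) is an order isomorphism from the collection of finite subsets of λ, equipped with the top-down lexicographic order, onto the ordinal 2^λ. -/
/-!
The sums `twoPowSum p` are the base-`2` Cantor normal forms. Since the powers of `2` in
`twoPowSum p` strictly decrease, `twoPowSum p < 2 ^ a` whenever `p` lies below `a`. If the largest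
element `m` of `p ∆ q` lies in `q`, then `p` and `q` agree above `m`, and what remains of `p` sums
to less than `2 ^ m`, while what remains of `q` sums to at least `2 ^ m`; so `twoPowSum` is strictly
monotone for the colexicographic order, which is the top-down lexicographic order. Conversely every
`o < 2 ^ λ` is reached by peeling off the largest power `2 ^ log 2 o ≤ o` and recursing on the
remainder, which is smaller than `2 ^ log 2 o`.
-/

/-- The top-down lexicographic order on finite sets of ordinals:
`p < q` iff `p ≠ q` and the maximum of the symmetric difference `p ∆ q` belongs to `q`. -/
def tdLex (p q : Finset Ordinal) : Prop :=
  ∃ m ∈ symmDiff p q, m ∈ q ∧ ∀ x ∈ symmDiff p q, x ≤ m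

/-- For `p = {p_0 > p_1 > ... > p_{n-1}}`, the ordinal sum
`2 ^ p_0 + 2 ^ p_1 + ... + 2 ^ p_{n-1}` (summed in decreasing order of exponents);
the empty set is sent to `0`. -/
noncomputable def twoPowSum (p : Finset Ordinal) : Ordinal :=
  if h : p.Nonempty then
    (2 : Ordinal) ^ (p.max' h) + twoPowSum (p.erase (p.max' h))
  else 0
termination_by p.card
decreasing_by
  exact Finset.card_erase_lt_of_mem (p.max'_mem h)

open Finset Ordinal

lemma two_opow_add_one (a : Ordinal) : (2 : Ordinal) ^ (a + 1) = 2 ^ a + 2 ^ a := by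
  rw [opow_add, opow_one, Ordinal.mul_two]

lemma tdLex_iff_toColex_lt (p q : Finset Ordinal) : tdLex p q ↔ toColex p < toColex q := by
  rw [Colex.toColex_lt_toColex_iff_max'_mem]
  constructor
  · rintro ⟨m, hm, hmq, hmax⟩
    refine ⟨symmDiff_nonempty.1 ⟨m, hm⟩, ?_⟩
    rwa [le_antisymm (max'_le _ _ _ hmax) (le_max' _ _ hm)]
  · rintro ⟨hne, hmq⟩
    exact ⟨_, max'_mem _ _, hmq, fun x hx => le_max' _ x hx⟩

@[simp]
lemma twoPowSum_empty : twoPowSum ∅ = 0 := by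
  rw [twoPowSum]; simp

lemma twoPowSum_insert {a : Ordinal} {s : Finset Ordinal} (h : ∀ x ∈ s, x < a) :
    twoPowSum (insert a s) = 2 ^ a + twoPowSum s := by
  have hmax : (insert a s).max' (insert_nonempty a s) = a :=
    le_antisymm (max'_le _ _ _ (by simpa using fun x hx => (h x hx).le))
      (le_max' _ _ (mem_insert_self a s))
  have has : a ∉ s := fun ha => (h a ha).false
  rw [twoPowSum, dif_pos (insert_nonempty a s), hmax, erase_insert has]

lemma twoPowSum_lt_two_opow {a : Ordinal} {s : Finset Ordinal} (h : ∀ x ∈ s, x < a) :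
    twoPowSum s < 2 ^ a := by
  induction s using induction_on_max generalizing a with
  | empty => simpa using opow_pos a two_pos
  | insert b s hs ih =>
    have hba : b < a := h b (mem_insert_self b s)
    calc twoPowSum (insert b s) = 2 ^ b + twoPowSum s := twoPowSum_insert hs
      _ < 2 ^ b + 2 ^ b := (add_lt_add_iff_left _).2 (ih hs)
      _ = 2 ^ (b + 1) := (two_opow_add_one b).symm
      _ ≤ 2 ^ a := opow_le_opow_right two_pos (Order.add_one_le_of_lt hba)

lemma two_opow_le_twoPowSum {a : Ordinal} {s : Finset Ordinal} (ha : a ∈ s)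
    (h : ∀ x ∈ s, x ≤ a) : 2 ^ a ≤ twoPowSum s := by
  rw [← insert_erase ha, twoPowSum_insert fun x hx => (h x (mem_of_mem_erase hx)).lt_of_ne
    (ne_of_mem_erase hx)]
  exact le_self_add

lemma twoPowSum_union {s t : Finset Ordinal} (h : ∀ a ∈ s, ∀ b ∈ t, b < a) :
    twoPowSum (s ∪ t) = twoPowSum s + twoPowSum t := by
  induction s using induction_on_max with
  | empty => simp
  | insert a s hs ih =>
    have hst : ∀ x ∈ s ∪ t, x < a := by
      simpa [or_imp, forall_and] using ⟨hs, h a (mem_insert_self a s)⟩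
    rw [insert_union, twoPowSum_insert hst, twoPowSum_insert hs,
      ih fun x hx => h x (mem_insert_of_mem hx), add_assoc]

lemma twoPowSum_eq_add_filter (w : Ordinal) (s : Finset Ordinal) :
    twoPowSum s = twoPowSum {a ∈ s | w < a} + twoPowSum {a ∈ s | ¬w < a} := by
  rw [← twoPowSum_union, filter_union_filter_not_eq]
  simp only [mem_filter, not_lt]
  exact fun a ha b hb => hb.2.trans_lt ha.2

lemma twoPowSum_lt_twoPowSum_of_toColex_lt {s t : Finset Ordinal} (hst : toColex s < toColex t) :
    twoPowSum s < twoPowSum t := by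
  obtain ⟨w, hw, hfilter⟩ := Colex.lt_iff_exists_filter_lt.1 hst
  obtain ⟨hwt, hws⟩ := mem_sdiff.1 hw
  rw [twoPowSum_eq_add_filter w s, twoPowSum_eq_add_filter w t, hfilter]
  refine (add_lt_add_iff_left _).2 ?_
  calc twoPowSum {a ∈ s | ¬w < a} < 2 ^ w := twoPowSum_lt_two_opow fun x hx => by
        obtain ⟨hxs, hxw⟩ := mem_filter.1 hx
        exact (not_lt.1 hxw).lt_of_ne (ne_of_mem_of_not_mem hxs hws)
    _ ≤ twoPowSum {a ∈ t | ¬w < a} :=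
        two_opow_le_twoPowSum (mem_filter.2 ⟨hwt, lt_irrefl w⟩) fun x hx =>
          not_lt.1 (mem_filter.1 hx).2

lemma twoPowSum_ofColex_strictMono :
    StrictMono fun s : Colex (Finset Ordinal) => twoPowSum (ofColex s) :=
  fun _ _ => twoPowSum_lt_twoPowSum_of_toColex_lt

lemma exists_twoPowSum_eq {o l : Ordinal} (ho : o < 2 ^ l) :
    ∃ p : Finset Ordinal, (∀ a ∈ p, a < l) ∧ twoPowSum p = o := by
  induction o using WellFoundedLT.induction generalizing l with
  | _ o ih =>
    rcases eq_or_ne o 0 with rfl | ho₀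
    · exact ⟨∅, by simp, twoPowSum_empty⟩
    set m := log 2 o
    have hmo : 2 ^ m ≤ o := opow_log_le_self 2 ho₀
    have hom : o < 2 ^ m + 2 ^ m := by
      rw [← two_opow_add_one, ← Order.succ_eq_add_one]
      exact lt_opow_succ_log_self one_lt_two o
    have hor : 2 ^ m + (o - 2 ^ m) = o := Ordinal.add_sub_cancel_of_le hmo
    have hrm : o - 2 ^ m < 2 ^ m := by
      rw [← hor] at hom
      exact (add_lt_add_iff_left _).1 hom
    obtain ⟨p, hpm, hp⟩ := ih _ (hrm.trans_le hmo) hrm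
    have hml : m < l := (opow_lt_opow_iff_right one_lt_two).1 (hmo.trans_lt ho)
    refine ⟨insert m p, ?_, by rw [twoPowSum_insert hpm, hp, hor]⟩
    simpa using ⟨hml, fun a ha => (hpm a ha).trans hml⟩

/-- `p ↦ Σ 2^{p_i}` is an order isomorphism from the finite subsets of `λ` with the
top-down lexicographic order onto the ordinal `2 ^ λ`. -/
theorem twoPowSum_orderIso (l : Ordinal) :
    (∀ p : Finset Ordinal, (∀ a ∈ p, a < l) → twoPowSum p < (2 : Ordinal) ^ l) ∧
    (∀ o : Ordinal, o < (2 : Ordinal) ^ l →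
      ∃ p : Finset Ordinal, (∀ a ∈ p, a < l) ∧ twoPowSum p = o) ∧
    (∀ p q : Finset Ordinal, (∀ a ∈ p, a < l) → (∀ a ∈ q, a < l) →
      (tdLex p q ↔ twoPowSum p < twoPowSum q)) :=
  ⟨fun _ hp => twoPowSum_lt_two_opow hp, fun _ ho => exists_twoPowSum_eq ho,
    fun p q _ _ => (tdLex_iff_toColex_lt p q).trans twoPowSum_ofColex_strictMono.lt_iff_lt.symm⟩
end

section
/- The order on the class D of pairs (z, ζ) — where z is a finite set of ordinals, ζ is an ordinal, and either z = ∅ or ζ ≤ min(z) — defined by: (z, ζ) < (y, υ) iff, writing z = {z_0 > ... > z_{m-1}} with z_m = ζ and y = {y_0 > ... > y_{n-1}} with y_n = υ, either (m < n and z_i = y_i for all i ≤ m) or there is k ≤ min(m,n) with z↾k = y↾k and z_k < y_k — is a strict linear order and is wellfounded. -/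
/-- The `i`-th entry of the strictly decreasing enumeration `z_0 > ... > z_{m-1}` of the
finite set `z` of ordinals, extended by `z_m = ζ` (the default value for indices `≥ m`). -/
noncomputable def ent (z : Finset Ordinal) (ζ : Ordinal) (i : ℕ) : Ordinal :=
  ((z.sort (· ≤ ·)).reverse).getD i ζ

/-- The order on pairs `(z, ζ)`: writing `z = {z_0 > ... > z_{m-1}}` with `z_m = ζ` and
`y = {y_0 > ... > y_{n-1}}` with `y_n = υ`, we have `(z, ζ) < (y, υ)` iff either
`m < n` and `z_i = y_i` for all `i ≤ m`, or there is `k ≤ min(m,n)` with `z↾k = y↾k`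
and `z_k < y_k`. -/
noncomputable def ltD (p q : Finset Ordinal × Ordinal) : Prop :=
  (p.1.card < q.1.card ∧ ∀ i ≤ p.1.card, ent p.1 p.2 i = ent q.1 q.2 i) ∨
  ∃ k : ℕ, k ≤ p.1.card ∧ k ≤ q.1.card ∧ (∀ i < k, ent p.1 p.2 i = ent q.1 q.2 i) ∧
    ent p.1 p.2 k < ent q.1 q.2 k

/-- The class `D` of pairs `(z, ζ)` with `z` a finite set of ordinals, `ζ` an ordinal,
and either `z = ∅` or `ζ ≤ min z`. -/
def DClass : Set (Finset Ordinal × Ordinal) :=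
  {p | p.1 = ∅ ∨ ∀ a ∈ p.1, p.2 ≤ a}

/-!
Reading `(z, ζ)` as the word `z₀ z₁ ⋯ z_{m-1} ζ`, the order `ltD` is exactly the lexicographic
order on words, which is linear. Words of pairs in `D` are non-increasing, and on non-increasing
words the lexicographic order is reflected by the Cantor normal form
`ω ^ z₀ + ⋯ + ω ^ z_{m-1} + ω ^ ζ`, so wellfoundedness is inherited from the ordinals.
-/

namespace Ordinal

theorem sum_map_omega0_opow_lt_omega0_opow {b : Ordinal} :
    ∀ {l : List Ordinal}, (∀ x ∈ l, x < b) → (l.map (ω ^ ·)).sum < ω ^ b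
  | [], _ => by simpa using opow_pos b omega0_pos
  | a :: l, h => by
    simp only [List.map_cons, List.sum_cons]
    exact isPrincipal_add_omega0_opow b
      ((opow_lt_opow_iff_right one_lt_omega0).2 (h a List.mem_cons_self))
      (sum_map_omega0_opow_lt_omega0_opow fun x hx => h x (List.mem_cons_of_mem a hx))

theorem sum_map_omega0_opow_lt_of_lex {l₁ l₂ : List Ordinal} (h : List.Lex (· < ·) l₁ l₂)
    (hl₁ : l₁.Pairwise (· ≥ ·)) : (l₁.map (ω ^ ·)).sum < (l₂.map (ω ^ ·)).sum := by
  induction h with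
  | nil => simpa using (opow_pos _ omega0_pos).trans_le le_self_add
  | cons _ ih => simpa using ih (List.pairwise_cons.1 hl₁).2
  | @rel a t₁ b t₂ hab =>
    have hlt : ∀ x ∈ a :: t₁, x < b := by
      rintro x (_ | ⟨_, hx⟩)
      · exact hab
      · exact ((List.pairwise_cons.1 hl₁).1 x hx).trans_lt hab
    calc ((a :: t₁).map (ω ^ ·)).sum < ω ^ b := sum_map_omega0_opow_lt_omega0_opow hlt
      _ ≤ ((b :: t₂).map (ω ^ ·)).sum := by simp

end Ordinal

open Ordinal

noncomputable def entList (p : Finset Ordinal × Ordinal) : List Ordinal :=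
  (p.1.sort (· ≤ ·)).reverse ++ [p.2]

@[simp]
theorem length_entList (p : Finset Ordinal × Ordinal) : (entList p).length = p.1.card + 1 := by
  simp [entList]

theorem ent_eq_getElem_entList (p : Finset Ordinal × Ordinal) {i : ℕ}
    (hi : i < (entList p).length) : ent p.1 p.2 i = (entList p)[i] := by
  rw [length_entList] at hi
  rcases (Nat.lt_succ_iff.1 hi).lt_or_eq with hi | rfl
  · simp [ent, entList, List.getElem_append_left, hi]
  · simp [ent, entList]

theorem entList_injective : Function.Injective entList := by
  classical
  intro p q h
  have h' := List.append_inj' h rfl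
  exact Prod.ext (by simpa using congrArg List.toFinset h'.1) (by simpa using h'.2)

theorem ltD_iff_entList_lt {p q : Finset Ordinal × Ordinal} :
    ltD p q ↔ entList p < entList q := by
  rw [List.lt_iff_exists, ← List.prefix_iff_eq_take, List.prefix_iff_getElem]
  simp only [length_entList, add_lt_add_iff_right, ← ent_eq_getElem_entList, Nat.lt_succ_iff,
    exists_prop, ltD]
  exact or_congr_left
    ⟨fun ⟨hlt, he⟩ => ⟨⟨by omega, he⟩, hlt⟩, fun ⟨⟨_, he⟩, hlt⟩ => ⟨hlt, he⟩⟩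

theorem entList_pairwise_ge {p : Finset Ordinal × Ordinal} (hp : p ∈ DClass) :
    (entList p).Pairwise (· ≥ ·) := by
  rw [entList, List.pairwise_append, List.pairwise_reverse]
  refine ⟨(p.1.pairwise_sort _).imp id, List.pairwise_singleton _ _, ?_⟩
  simp only [List.mem_reverse, Finset.mem_sort, List.mem_singleton]
  rintro a ha _ rfl
  rcases hp with h | h
  · simp [h] at ha
  · exact h a ha

/-- On `D`, the order `ltD` is a strict linear order (irreflexive, transitive, total on
distinct pairs) and is wellfounded (every nonempty subset of `D` has a minimal element). -/
theorem ltD_strict_linear_order_wellFounded :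
    (∀ p ∈ DClass, ¬ ltD p p) ∧
    (∀ p ∈ DClass, ∀ q ∈ DClass, ∀ r ∈ DClass, ltD p q → ltD q r → ltD p r) ∧
    (∀ p ∈ DClass, ∀ q ∈ DClass, p ≠ q → ltD p q ∨ ltD q p) ∧
    (∀ S : Set (Finset Ordinal × Ordinal), S ⊆ DClass → S.Nonempty →
      ∃ p ∈ S, ∀ q ∈ S, ¬ ltD q p) := by
  simp only [ltD_iff_entList_lt]
  refine ⟨fun p _ => lt_irrefl _, fun p _ q _ r _ => lt_trans,
    fun p _ q _ hpq => lt_or_gt_of_ne (entList_injective.ne hpq), fun S hS hne => ?_⟩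
  let cnf : Finset Ordinal × Ordinal → Ordinal := fun p => ((entList p).map (ω ^ ·)).sum
  obtain ⟨p, hp, hmin⟩ := (InvImage.wf cnf Ordinal.lt_wf).has_min S hne
  exact ⟨p, hp, fun q hq hqp =>
    hmin q hq (sum_map_omega0_opow_lt_of_lex hqp (entList_pairwise_ge (hS hq)))⟩
end

section
/- Let R and S be binary relations on a type (or set) A. Suppose S is wellfounded, and suppose that for all a, b ∈ A with R a b, there exists c ∈ A such that S c b and every R-predecessor of a is an R-predecessor of c (i.e., for all d, R d a implies R d c). Then R is wellfounded. -/
/-- Abstract wellfoundedness lemma (in the minimal-element formulation): if `S` is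
wellfounded, and whenever `R a b` there is `c` with `S c b` such that every
`R`-predecessor of `a` is an `R`-predecessor of `c`, then `R` is wellfounded. -/
theorem wellFounded_of_dominated {A : Type*} (R S : A → A → Prop)
    (hS : ∀ T : Set A, T.Nonempty → ∃ b ∈ T, ∀ c ∈ T, ¬ S c b)
    (h : ∀ a b : A, R a b → ∃ c : A, S c b ∧ ∀ d : A, R d a → R d c) :
    ∀ T : Set A, T.Nonempty → ∃ a ∈ T, ∀ d ∈ T, ¬ R d a := by
  intro T hT
  by_contra hcon
  push_neg at hcon
  have hmin : ∀ a ∈ T, ∃ d ∈ T, R d a := by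
    intro a ha
    obtain ⟨d, hd, hRd⟩ := hcon a ha
    exact ⟨d, hd, hRd⟩
  set U : Set A := {b | ∃ d ∈ T, R d b} with hU
  obtain ⟨a, ha⟩ := hT
  obtain ⟨d0, hd0, hRd0⟩ := hmin a ha
  obtain ⟨b, hb, hbmin⟩ := hS U ⟨a, d0, hd0, hRd0⟩
  obtain ⟨d, hd, hRdb⟩ := hb
  obtain ⟨c, hSc, hc⟩ := h d b hRdb
  obtain ⟨e, he, hRe⟩ := hmin d hd
  exact hbmin c ⟨e, he, hc e hRe⟩ hSc
end
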